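/- Let (X, ℬ) be a measurable space and κ a sub-Markov transition kernel on X. Let 𝒢 denote the set of all conservative reversible probability measures for κ and ℐ the set of all invariant probability measures for κ. Then every extreme element of 𝒢 is an extreme element of ℐ. -/

import Mathlib

open MeasureTheory ProbabilityTheory

variable {X : Type*} [MeasurableSpace X]

/-- A function is bounded measurable. -/
def BddMeasurable {X : Type*} [MeasurableSpace X] (f : X → ℝ) : Prop :=
  Measurable f ∧ ∃ C : ℝ, ∀ x, |f x| ≤ C

/-- The transition operator `T f (x) = ∫ f(y) κ(x, dy)`. -/
noncomputable def Tker {X : Type*} [MeasurableSpace X] (κ : Kernel X X) (f : X → ℝ) :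
    X → ℝ :=
  fun x => ∫ y, f y ∂(κ x)

/-- `m` is an invariant measure: `∫ T f dm = ∫ f dm` for all bounded measurable `f`. -/
def IsInvariantMeas {X : Type*} [MeasurableSpace X] (κ : Kernel X X) (m : Measure X) : Prop :=
  ∀ f : X → ℝ, BddMeasurable f → ∫ x, Tker κ f x ∂m = ∫ x, f x ∂m

/-- `m` is a reversible measure: `∫ (T f) g dm = ∫ f (T g) dm`
for all bounded measurable `f, g`. -/
def IsReversibleMeas {X : Type*} [MeasurableSpace X] (κ : Kernel X X) (m : Measure X) : Prop :=
  ∀ f g : X → ℝ, BddMeasurable f → BddMeasurable g →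
    ∫ x, Tker κ f x * g x ∂m = ∫ x, f x * Tker κ g x ∂m

/-- `m` is a conservative measure: `∫ (T 1) g dm = ∫ g dm`
for all bounded measurable `g`, where `T 1 (x) = κ(x, X)`. -/
def IsConservativeMeas {X : Type*} [MeasurableSpace X] (κ : Kernel X X) (m : Measure X) :
    Prop :=
  ∀ g : X → ℝ, BddMeasurable g → ∫ x, (κ x Set.univ).toReal * g x ∂m = ∫ x, g x ∂m

/-- `m` is an extreme element of a set `C` of measures: `m ∈ C` and whenever
`m = (1 - t) • m₀ + t • m₁` with `t ∈ (0,1)` and `m₀, m₁ ∈ C`, one has `m₀ = m₁`. -/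
def IsExtremeElem {X : Type*} [MeasurableSpace X] (C : Set (Measure X)) (m : Measure X) :
    Prop :=
  m ∈ C ∧ ∀ t : ℝ, t ∈ Set.Ioo (0 : ℝ) 1 → ∀ m₀ m₁ : Measure X, m₀ ∈ C → m₁ ∈ C →
    m = ENNReal.ofReal (1 - t) • m₀ + ENNReal.ofReal t • m₁ → m₀ = m₁

/-!
Let `m` be conservative and reversible and write `m = (1 - t) m₀ + t m₁` with `m₀, m₁` invariant.
Each `mᵢ` is dominated by a multiple of `m`, so `dmᵢ = H dm` with `H` bounded. Conservativity
forces `κ(x, X) = 1` for `m`-a.e. `x`, and invariance of `mᵢ` together with reversibility of `m`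
makes `H` harmonic: `T H = H` `m`-a.e. Since `m` is invariant, `∫ (T (H²) - (T H)²) dm = 0`;
the integrand is the variance of `H` under `κ(x, ·)`, so `H = H(x)` for `κ(x, ·)`-a.e. `y`.
Hence `T (H g) = H · T g`, which transfers reversibility from `m` to `mᵢ`. Thus `m₀, m₁ ∈ 𝒢`, and
extremality of `m` in `𝒢` gives `m₀ = m₁`.
-/

namespace BddMeasurable

variable {f g : X → ℝ}

lemma memLp (hf : BddMeasurable f) (p : ENNReal) (μ : Measure X) [IsFiniteMeasure μ] :
    MemLp f p μ :=
  let ⟨hfm, C, hC⟩ := hf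
  .of_bound hfm.aestronglyMeasurable C (.of_forall hC)

lemma integrable (hf : BddMeasurable f) (μ : Measure X) [IsFiniteMeasure μ] :
    Integrable f μ :=
  memLp_one_iff_integrable.mp (hf.memLp 1 μ)

lemma mul (hf : BddMeasurable f) (hg : BddMeasurable g) : BddMeasurable (fun x => f x * g x) := by
  obtain ⟨hfm, C, hC⟩ := hf
  obtain ⟨hgm, D, hD⟩ := hg
  refine ⟨hfm.mul hgm, C * D, fun x => ?_⟩
  rw [abs_mul]
  exact mul_le_mul (hC x) (hD x) (abs_nonneg _) ((abs_nonneg _).trans (hC x))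

lemma sub (hf : BddMeasurable f) (hg : BddMeasurable g) : BddMeasurable (fun x => f x - g x) :=
  let ⟨hfm, C, hC⟩ := hf
  let ⟨hgm, D, hD⟩ := hg
  ⟨hfm.sub hgm, C + D, fun x => (abs_sub _ _).trans (add_le_add (hC x) (hD x))⟩

lemma sq (hf : BddMeasurable f) : BddMeasurable (fun x => f x ^ 2) := by
  simpa only [pow_two] using hf.mul hf

end BddMeasurable

lemma bddMeasurable_const (c : ℝ) : BddMeasurable (fun _ : X => c) :=
  ⟨measurable_const, |c|, fun _ => le_rfl⟩

lemma ae_eq_of_forall_integral_mul_eq {m : Measure X} [IsFiniteMeasure m] {F G : X → ℝ}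
    (hF : BddMeasurable F) (hG : BddMeasurable G)
    (h : ∀ g, BddMeasurable g → ∫ x, F x * g x ∂m = ∫ x, G x * g x ∂m) :
    F =ᵐ[m] G := by
  have hD := hF.sub hG
  have hsq : ∫ x, (F x - G x) ^ 2 ∂m = 0 := by
    rw [← sub_eq_zero.mpr (h _ hD), ← integral_sub ((hF.mul hD).integrable m)
      ((hG.mul hD).integrable m)]
    simp only [← sub_mul, pow_two]
  filter_upwards [(integral_eq_zero_iff_of_nonneg (fun x => sq_nonneg _) (hD.sq.integrable m)).mp
    hsq] with x hx
  simpa [sub_eq_zero] using hx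

lemma exists_bddMeasurable_density {μ m : Measure X} [IsFiniteMeasure μ] [IsFiniteMeasure m]
    {s : ℝ} (hs : 0 < s) (hle : ENNReal.ofReal s • μ ≤ m) :
    ∃ H : X → ℝ, BddMeasurable H ∧ ∀ g : X → ℝ, ∫ x, g x ∂μ = ∫ x, H x * g x ∂m := by
  have hs₀ : ENNReal.ofReal s ≠ 0 := (ENNReal.ofReal_pos.mpr hs).ne'
  have hac : μ ≪ m :=
    (Measure.absolutelyContinuous_smul hs₀).trans (Measure.absolutelyContinuous_of_le hle)
  have hbound : ∀ᵐ x ∂m, (μ.rnDeriv m x).toReal ≤ s⁻¹ := by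
    filter_upwards [Measure.rnDeriv_smul_left_of_ne_top μ m ENNReal.ofReal_ne_top,
      Measure.rnDeriv_le_one_of_le hle] with x hsmul hle_one
    rw [hsmul, Pi.smul_apply, smul_eq_mul, Pi.one_apply, mul_comm,
      ← ENNReal.le_inv_iff_mul_le] at hle_one
    simpa [ENNReal.toReal_inv, ENNReal.toReal_ofReal hs.le] using
      ENNReal.toReal_mono (ENNReal.inv_ne_top.mpr hs₀) hle_one
  -- Truncating at `s⁻¹` changes the Radon-Nikodym derivative only on an `m`-null set.
  refine ⟨fun x => min (μ.rnDeriv m x).toReal s⁻¹, ⟨?_, s⁻¹, fun x => ?_⟩, fun g => ?_⟩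
  · exact (μ.measurable_rnDeriv m).ennreal_toReal.min measurable_const
  · rw [abs_of_nonneg (le_min ENNReal.toReal_nonneg (by positivity))]
    exact min_le_right _ _
  · rw [← integral_toReal_rnDeriv_mul hac]
    refine integral_congr_ae ?_
    filter_upwards [hbound] with x hx
    rw [min_eq_left hx]

section Kernel

variable {κ : Kernel X X} {m μ : Measure X}

lemma tker_one (x : X) : Tker κ (fun _ => 1) x = (κ x Set.univ).toReal := by
  simp [Tker, Measure.real]

lemma toReal_kernel_univ_le_one (hκ : ∀ x, κ x Set.univ ≤ 1) (x : X) :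
    (κ x Set.univ).toReal ≤ 1 :=
  ENNReal.toReal_le_of_le_ofReal zero_le_one (by simpa using hκ x)

lemma bddMeasurable_kernel_univ (hκ : ∀ x, κ x Set.univ ≤ 1) :
    BddMeasurable (fun x => (κ x Set.univ).toReal) :=
  ⟨(κ.measurable_coe MeasurableSet.univ).ennreal_toReal, 1, fun x => by
    simpa using toReal_kernel_univ_le_one hκ x⟩

lemma bddMeasurable_tker [IsFiniteKernel κ] {f : X → ℝ} (hf : BddMeasurable f) :
    BddMeasurable (Tker κ f) := by
  obtain ⟨hfm, C, hC⟩ := hf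
  refine ⟨hfm.stronglyMeasurable.integral_kernel.measurable, C * κ.bound.toReal, fun x => ?_⟩
  calc |Tker κ f x| ≤ C * (κ x).real Set.univ :=
        norm_integral_le_of_norm_le_const (μ := κ x) (f := f) (.of_forall hC)
    _ ≤ C * κ.bound.toReal :=
        mul_le_mul_of_nonneg_left (ENNReal.toReal_mono κ.bound_ne_top (κ.measure_le_bound x _))
          ((abs_nonneg _).trans (hC x))

lemma IsConservativeMeas.isInvariantMeas (hC : IsConservativeMeas κ m)
    (hR : IsReversibleMeas κ m) : IsInvariantMeas κ m := by
  intro f hf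
  calc ∫ x, Tker κ f x ∂m = ∫ x, Tker κ f x * 1 ∂m := by simp only [mul_one]
    _ = ∫ x, f x * Tker κ (fun _ => 1) x ∂m := hR f _ hf (bddMeasurable_const 1)
    _ = ∫ x, (κ x Set.univ).toReal * f x ∂m := by simp only [tker_one, mul_comm]
    _ = ∫ x, f x ∂m := hC f hf

lemma IsConservativeMeas.ae_kernel_univ_eq_one [IsFiniteMeasure m] (hκ : ∀ x, κ x Set.univ ≤ 1)
    (hC : IsConservativeMeas κ m) : ∀ᵐ x ∂m, κ x Set.univ = 1 := by
  have hT1 := bddMeasurable_kernel_univ hκ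
  have hdefect : ∫ x, (1 - (κ x Set.univ).toReal) ∂m = 0 := by
    rw [integral_sub (integrable_const 1) (hT1.integrable m)]
    simpa [sub_eq_zero] using (hC _ (bddMeasurable_const 1)).symm
  filter_upwards [(integral_eq_zero_iff_of_nonneg
    (fun x => sub_nonneg.mpr (toReal_kernel_univ_le_one hκ x))
    ((bddMeasurable_const 1).sub hT1 |>.integrable m)).mp hdefect] with x hx
  rwa [Pi.zero_apply, sub_eq_zero, eq_comm, ENNReal.toReal_eq_one_iff] at hx

variable {H : X → ℝ}

lemma isConservativeMeas_of_density (h1 : ∀ᵐ x ∂m, κ x Set.univ = 1)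
    (hdens : ∀ g : X → ℝ, ∫ x, g x ∂μ = ∫ x, H x * g x ∂m) : IsConservativeMeas κ μ := by
  intro g _
  rw [hdens, hdens]
  exact integral_congr_ae (h1.mono fun x hx => by simp [hx])

lemma tker_ae_eq_self_of_density [IsFiniteMeasure m] [IsFiniteKernel κ]
    (hR : IsReversibleMeas κ m) (hμ : IsInvariantMeas κ μ) (hH : BddMeasurable H)
    (hdens : ∀ g : X → ℝ, ∫ x, g x ∂μ = ∫ x, H x * g x ∂m) : Tker κ H =ᵐ[m] H := by
  refine ae_eq_of_forall_integral_mul_eq (bddMeasurable_tker hH) hH fun g hg => ?_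
  calc ∫ x, Tker κ H x * g x ∂m = ∫ x, H x * Tker κ g x ∂m := hR H g hH hg
    _ = ∫ x, Tker κ g x ∂μ := (hdens _).symm
    _ = ∫ x, g x ∂μ := hμ g hg
    _ = ∫ x, H x * g x ∂m := hdens g

lemma variance_kernel_eq {x : X} (hx : κ x Set.univ = 1) (hH : BddMeasurable H) :
    Var[H; κ x] = Tker κ (fun y => H y ^ 2) x - Tker κ H x ^ 2 := by
  have : IsProbabilityMeasure (κ x) := ⟨hx⟩
  exact variance_eq_sub (hH.memLp 2 _)

lemma ae_variance_kernel_eq_zero [IsFiniteMeasure m] [IsFiniteKernel κ]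
    (hI : IsInvariantMeas κ m) (h1 : ∀ᵐ x ∂m, κ x Set.univ = 1) (hH : BddMeasurable H)
    (hTH : Tker κ H =ᵐ[m] H) : ∀ᵐ x ∂m, Var[H; κ x] = 0 := by
  have hvar : (fun x => Var[H; κ x]) =ᵐ[m] fun x => Tker κ (fun y => H y ^ 2) x - H x ^ 2 := by
    filter_upwards [h1, hTH] with x hx hHx
    rw [variance_kernel_eq hx hH, hHx]
  have hTH2 := bddMeasurable_tker (κ := κ) hH.sq
  have hint : ∫ x, Var[H; κ x] ∂m = 0 := by
    rw [integral_congr_ae hvar, integral_sub (hTH2.integrable m) (hH.sq.integrable m),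
      hI _ hH.sq, sub_self]
  exact (integral_eq_zero_iff_of_nonneg (fun x => variance_nonneg _ _)
    (((hTH2.sub hH.sq).integrable m).congr hvar.symm)).mp hint

lemma ae_ae_eq_const_of_tker_ae_eq_self [IsFiniteMeasure m] [IsFiniteKernel κ]
    (hI : IsInvariantMeas κ m) (h1 : ∀ᵐ x ∂m, κ x Set.univ = 1) (hH : BddMeasurable H)
    (hTH : Tker κ H =ᵐ[m] H) : ∀ᵐ x ∂m, H =ᵐ[κ x] fun _ => H x := by
  filter_upwards [h1, hTH, ae_variance_kernel_eq_zero hI h1 hH hTH] with x hx hHx hvar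
  have : IsProbabilityMeasure (κ x) := ⟨hx⟩
  have hconst := ae_eq_integral_of_variance_eq_zero (hH.memLp 2 _) hvar
  rwa [show ∫ y, H y ∂κ x = H x from hHx] at hconst

lemma tker_mul_ae_eq_of_ae_ae_eq_const (hconst : ∀ᵐ x ∂m, H =ᵐ[κ x] fun _ => H x)
    (g : X → ℝ) : (fun x => Tker κ (fun y => H y * g y) x) =ᵐ[m] fun x => H x * Tker κ g x := by
  filter_upwards [hconst] with x hx
  rw [Tker, Tker, ← integral_const_mul]
  exact integral_congr_ae (hx.mono fun y hy => congrArg (· * g y) hy)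

lemma isReversibleMeas_of_density [IsFiniteMeasure m] [IsFiniteKernel κ]
    (hR : IsReversibleMeas κ m) (hH : BddMeasurable H)
    (hdens : ∀ g : X → ℝ, ∫ x, g x ∂μ = ∫ x, H x * g x ∂m)
    (hconst : ∀ᵐ x ∂m, H =ᵐ[κ x] fun _ => H x) : IsReversibleMeas κ μ := by
  intro f g hf hg
  calc ∫ x, Tker κ f x * g x ∂μ
      = ∫ x, Tker κ f x * (H x * g x) ∂m := by
        rw [hdens]; exact integral_congr_ae (.of_forall fun x => by ring)
    _ = ∫ x, f x * Tker κ (fun y => H y * g y) x ∂m := hR f _ hf (hH.mul hg)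
    _ = ∫ x, H x * (f x * Tker κ g x) ∂m := by
        refine integral_congr_ae ?_
        filter_upwards [tker_mul_ae_eq_of_ae_ae_eq_const hconst g] with x hx
        rw [hx]; ring
    _ = ∫ x, f x * Tker κ g x ∂μ := (hdens _).symm

lemma isConservativeMeas_and_isReversibleMeas_of_smul_le [IsFiniteMeasure m] [IsFiniteMeasure μ]
    (hκ : ∀ x, κ x Set.univ ≤ 1) (hC : IsConservativeMeas κ m) (hR : IsReversibleMeas κ m)
    (hμ : IsInvariantMeas κ μ) {s : ℝ} (hs : 0 < s) (hle : ENNReal.ofReal s • μ ≤ m) :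
    IsConservativeMeas κ μ ∧ IsReversibleMeas κ μ := by
  have : IsFiniteKernel κ := ⟨⟨1, ENNReal.one_lt_top, hκ⟩⟩
  obtain ⟨H, hH, hdens⟩ := exists_bddMeasurable_density hs hle
  have h1 := hC.ae_kernel_univ_eq_one hκ
  have hconst := ae_ae_eq_const_of_tker_ae_eq_self (hC.isInvariantMeas hR) h1 hH
    (tker_ae_eq_self_of_density hR hμ hH hdens)
  exact ⟨isConservativeMeas_of_density h1 hdens, isReversibleMeas_of_density hR hH hdens hconst⟩

end Kernel

/-- Lemma 10: every extreme element of the set `𝒢` of conservative reversible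
probability measures is an extreme element of the set `ℐ` of invariant probability
measures. -/
theorem extreme_conservative_reversible_is_extreme_invariant
    (κ : Kernel X X) (hκ : ∀ x, κ x Set.univ ≤ 1) (m : Measure X)
    (hm : IsExtremeElem
      {μ : Measure X | IsProbabilityMeasure μ ∧ IsConservativeMeas κ μ ∧
        IsReversibleMeas κ μ} m) :
    IsExtremeElem {μ : Measure X | IsProbabilityMeasure μ ∧ IsInvariantMeas κ μ} m := by
  obtain ⟨⟨hmP, hmC, hmR⟩, hm_extreme⟩ := hm
  refine ⟨⟨hmP, hmC.isInvariantMeas hmR⟩, fun t ht m₀ m₁ ⟨h₀P, h₀I⟩ ⟨h₁P, h₁I⟩ hsplit => ?_⟩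
  have hle₀ : ENNReal.ofReal (1 - t) • m₀ ≤ m := hsplit ▸ Measure.le_add_right le_rfl
  have hle₁ : ENNReal.ofReal t • m₁ ≤ m := hsplit ▸ Measure.le_add_left le_rfl
  obtain ⟨h₀C, h₀R⟩ := isConservativeMeas_and_isReversibleMeas_of_smul_le hκ hmC hmR h₀I
    (sub_pos.mpr ht.2) hle₀
  obtain ⟨h₁C, h₁R⟩ := isConservativeMeas_and_isReversibleMeas_of_smul_le hκ hmC hmR h₁I ht.1 hle₁
  exact hm_extreme t ht m₀ m₁ ⟨h₀P, h₀C, h₀R⟩ ⟨h₁P, h₁C, h₁R⟩ hsplit
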